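/- There exists a finite automaton 𝒜 such that the set 𝔚 ∩ ℒ(𝒜) of traces of 𝒜 in weak agreement is not a context-free language; in particular, the set 𝔚 of traces in weak agreement is not context-free. -/
import Mathlib


/-- The five actions of the product automaton 𝒜₄ ⊗ 𝒜₅:
`tA = (ā,□)`, `tB = (b̄,□)`, `tS = (sig, s̄ig)`, `ta = (□,a)`, `tb = (□,b)`. -/
inductive PairAct where
  | tA | tB | tS | ta | tb
deriving DecidableEq

/-- The set of traces of the automaton 𝒜 that are in weak agreement:
a block of offers `tA`/`tB`, the match `tS`, then a block of requests
`ta`/`tb`, where each request is covered by a corresponding offer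
(#ta ≤ #tA and #tb ≤ #tB).  This is 𝔚 ∩ ℒ(𝒜). -/
def WeakAgreeLang : Language PairAct :=
  {w | ∃ u v : List PairAct,
    (∀ c ∈ u, c = PairAct.tA ∨ c = PairAct.tB) ∧
    (∀ c ∈ v, c = PairAct.ta ∨ c = PairAct.tb) ∧
    w = u ++ [PairAct.tS] ++ v ∧
    v.count PairAct.ta ≤ u.count PairAct.tA ∧
    v.count PairAct.tb ≤ u.count PairAct.tB}

namespace Pump
open ContextFreeGrammar
variable {T : Type}
mutual
inductive PT (g : ContextFreeGrammar.{0} T) : g.NT → Type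
  | node (r : ContextFreeRule T g.NT) (hr : r ∈ g.rules) (c : PF g r.output) : PT g r.input
inductive PF (g : ContextFreeGrammar.{0} T) : List (Symbol T g.NT) → Type
  | nil : PF g []
  | consT (a : T) {s : List (Symbol T g.NT)} (f : PF g s) : PF g (Symbol.terminal a :: s)
  | consN {A : g.NT} (t : PT g A) {s : List (Symbol T g.NT)} (f : PF g s) :
      PF g (Symbol.nonterminal A :: s)
end
variable {g : ContextFreeGrammar.{0} T}
mutual
def yieldT : {A : g.NT} → PT g A → List T
  | _, .node _ _ c => yieldF c
def yieldF : {s : List (Symbol T g.NT)} → PF g s → List T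
  | _, .nil => []
  | _, .consT a f => a :: yieldF f
  | _, .consN t f => yieldT t ++ yieldF f
end
mutual
def sizeT : {A : g.NT} → PT g A → ℕ
  | _, .node _ _ c => 1 + sizeF c
def sizeF : {s : List (Symbol T g.NT)} → PF g s → ℕ
  | _, .nil => 0
  | _, .consT _ f => sizeF f
  | _, .consN t f => sizeT t + sizeF f
end
abbrev mu (w : List T) : List (Symbol T g.NT) := w.map Symbol.terminal

mutual
theorem soundT : ∀ {A : g.NT} (t : PT g A),
    g.Derives [Symbol.nonterminal A] (mu (yieldT t))
  | _, .node r hr c =>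
    Derives.trans (Produces.single ⟨r, hr, by simpa using ContextFreeRule.Rewrites.input_output⟩)
      (by simpa [yieldT] using soundF c)
theorem soundF : ∀ {s : List (Symbol T g.NT)} (f : PF g s), g.Derives s (mu (yieldF f))
  | _, .nil => Derives.refl []
  | _, .consT a f => by
      simpa [yieldF] using (soundF f).append_left [Symbol.terminal a]
  | _, @PF.consN _ _ _ t s f => by
      have h1 := (soundT t).append_right s
      have h2 := (soundF f).append_left (mu (yieldT t))
      simpa [yieldF, mu] using Derives.trans h1 h2
end

theorem sizeT_pos : ∀ {A : g.NT} (t : PT g A), 1 ≤ sizeT t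
  | _, .node _ _ c => by simp [sizeT]

/-- max length of a rule output, at least 1 -/
noncomputable def Kc (g : ContextFreeGrammar.{0} T) : ℕ :=
  max 1 (g.rules.sup fun r => r.output.length)

theorem one_le_Kc : 1 ≤ Kc g := le_max_left _ _

theorem outlen_le_Kc {r : ContextFreeRule T g.NT} (hr : r ∈ g.rules) :
    r.output.length ≤ Kc g :=
  le_max_of_le_right (Finset.le_sup (f := fun r => r.output.length) hr)

open Classical in
/-- the nonterminals that can appear as a root of a parse tree -/
noncomputable def NTS (g : ContextFreeGrammar.{0} T) : Finset g.NT :=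
  g.rules.image ContextFreeRule.input

theorem root_mem_NTS : ∀ {A : g.NT} (_ : PT g A), A ∈ NTS g
  | _, .node r hr _ => by classical exact Finset.mem_image.mpr ⟨r, hr, rfl⟩

/-- one descent step at the forest level -/
theorem forest_step (M : ℕ) (hM : 1 ≤ M) :
    ∀ {s : List (Symbol T g.NT)} (c : PF g s),
    (yieldF c).length ≤ s.length * M ∨
    ∃ (B : g.NT) (t₁ : PT g B) (v x : List T) (F : PT g B → PF g s),
      M < (yieldT t₁).length ∧
      (∀ u, yieldF (F u) = v ++ yieldT u ++ x) ∧
      (∀ u, sizeF (F u) + sizeT t₁ = sizeF c + sizeT u) ∧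
      sizeT t₁ ≤ sizeF c ∧
      F t₁ = c ∧
      g.Derives s (mu v ++ [Symbol.nonterminal B] ++ mu x)
  | _, .nil => by left; simp [yieldF]
  | _, @PF.consT _ _ a s0 f => by
    rcases forest_step M hM f with h | ⟨B, t₁, v, x, F, h1, h2, h3, h4, h5, h6⟩
    · left
      have hy : (yieldF (PF.consT a f)).length = 1 + (yieldF f).length := by
        simp [yieldF]; omega
      rw [hy]
      simp only [List.length_cons]
      have : (s0.length + 1) * M = s0.length * M + M := by ring
      omega
    · right
      refine ⟨B, t₁, a :: v, x, fun u => .consT a (F u), h1, ?_, ?_, ?_, ?_, ?_⟩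
      · intro u; simp [yieldF, h2 u]
      · intro u; simpa [sizeF] using h3 u
      · simpa [sizeF] using h4
      · show PF.consT a (F t₁) = _; rw [h5]
      · simpa using h6.append_left [Symbol.terminal a]
  | _, @PF.consN _ _ A t s' f => by
    by_cases ht : M < (yieldT t).length
    · right
      refine ⟨A, t, [], yieldF f, fun u => .consN u f, ht, ?_, ?_, ?_, rfl, ?_⟩
      · intro u; simp [yieldF]
      · intro u; simp [sizeF]; omega
      · simp [sizeF]
      · simpa using (soundF f).append_left [Symbol.nonterminal A]
    · push_neg at ht
      rcases forest_step M hM f with h | ⟨B, t₁, v, x, F, h1, h2, h3, h4, h5, h6⟩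
      · left
        have hy : (yieldF (PF.consN t f)).length = (yieldT t).length + (yieldF f).length := by
          simp [yieldF]
        rw [hy]
        simp only [List.length_cons]
        calc (yieldT t).length + (yieldF f).length ≤ M + s'.length * M := by omega
          _ = (s'.length + 1) * M := by ring
      · right
        refine ⟨B, t₁, yieldT t ++ v, x, fun u => .consN t (F u), h1, ?_, ?_, ?_, ?_, ?_⟩
        · intro u; simp [yieldF, h2 u]
        · intro u; simp [sizeF]; have := h3 u; omega
        · simp [sizeF]; omega
        · show PF.consN t (F t₁) = _; rw [h5]
        · have hh1 := (soundT t).append_right s'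
          have hh2 := h6.append_left (mu (yieldT t))
          have := Derives.trans hh1 hh2
          simpa [mu] using this

theorem tree_step (M : ℕ) (hM : 1 ≤ M) :
    ∀ {A : g.NT} (t : PT g A),
    (yieldT t).length ≤ Kc g * M ∨
    ∃ (B : g.NT) (t₁ : PT g B) (v x : List T) (F : PT g B → PT g A),
      M < (yieldT t₁).length ∧
      (∀ u, yieldT (F u) = v ++ yieldT u ++ x) ∧
      (∀ u, sizeT (F u) + sizeT t₁ = sizeT t + sizeT u) ∧
      sizeT t₁ < sizeT t ∧
      F t₁ = t ∧
      g.Derives [Symbol.nonterminal A] (mu v ++ [Symbol.nonterminal B] ++ mu x)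
  | _, .node r hr c => by
    rcases forest_step M hM c with h | ⟨B, t₁, v, x, F, h1, h2, h3, h4, h5, h6⟩
    · left
      calc (yieldT (PT.node r hr c)).length ≤ r.output.length * M := by
            simpa [yieldT] using h
        _ ≤ Kc g * M := Nat.mul_le_mul_right M (outlen_le_Kc hr)
    · right
      refine ⟨B, t₁, v, x, fun u => .node r hr (F u), h1, ?_, ?_, ?_, ?_, ?_⟩
      · intro u; simpa [yieldT] using h2 u
      · intro u; have := h3 u; simp [sizeT]; omega
      · simp [sizeT]; omega
      · show PT.node r hr (F t₁) = _; rw [h5]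
      · refine Derives.trans (Produces.single ⟨r, hr, ?_⟩) h6
        simpa using ContextFreeRule.Rewrites.input_output

theorem localize (M : ℕ) (hM : 1 ≤ M) : ∀ (N : ℕ) {A : g.NT} (t : PT g A), sizeT t ≤ N →
    M < (yieldT t).length →
    ∃ (B : g.NT) (t' : PT g B) (U Y : List T) (F : PT g B → PT g A),
      M < (yieldT t').length ∧ (yieldT t').length ≤ Kc g * M ∧
      (∀ u, yieldT (F u) = U ++ yieldT u ++ Y) ∧
      (∀ u, sizeT (F u) + sizeT t' = sizeT t + sizeT u) ∧
      F t' = t ∧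
      g.Derives [Symbol.nonterminal A] (mu U ++ [Symbol.nonterminal B] ++ mu Y) := by
  intro N
  induction N with
  | zero => intro A t h _; exact absurd (sizeT_pos t) (by omega)
  | succ N ih =>
    intro A t hN hyt
    rcases tree_step M hM t with h | ⟨B, t₁, v, x, F, h1, h2, h3, h4, h5, h6⟩
    · exact ⟨A, t, [], [], id, hyt, h, by simp, fun u => by simp [Nat.add_comm], rfl,
        by simpa using Derives.refl ([Symbol.nonterminal A] : List (Symbol T g.NT))⟩
    · obtain ⟨B', t', U', Y', F', g1, g2, g3, g4, g5, g6⟩ := ih t₁ (by omega) h1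
      refine ⟨B', t', v ++ U', Y' ++ x, fun u => F (F' u), g1, g2, ?_, ?_, ?_, ?_⟩
      · intro u; rw [h2 (F' u), g3 u]; simp
      · intro u; beta_reduce; have := h3 (F' u); have := g4 u; omega
      · show F (F' t') = t; rw [g5, h5]
      · have hc := (g6.append_left (mu v)).append_right (mu x)
        have := h6.trans hc
        simpa [mu, List.append_assoc] using this

/-- record of an ancestor node with same-shape contexts -/
def AncRec (t_root : PT g g.initial) (B0 : ℕ) {C : g.NT} (t_cur : PT g C) (B : g.NT) : Prop :=
  ∃ (t_a : PT g B) (V X U Y : List T) (Fi : PT g C → PT g B) (Fo : PT g B → PT g g.initial),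
    Fi t_cur = t_a ∧
    (∀ u, yieldT (Fi u) = V ++ yieldT u ++ X) ∧
    (∀ u, sizeT (Fi u) + sizeT t_cur = sizeT t_a + sizeT u) ∧
    sizeT t_cur < sizeT t_a ∧
    (yieldT t_a).length ≤ B0 ∧
    Fo t_a = t_root ∧
    (∀ u, yieldT (Fo u) = U ++ yieldT u ++ Y) ∧
    (∀ u, sizeT (Fo u) + sizeT t_a = sizeT t_root + sizeT u) ∧
    g.Derives [Symbol.nonterminal B] (mu V ++ [Symbol.nonterminal C] ++ mu X) ∧
    g.Derives [Symbol.nonterminal g.initial] (mu U ++ [Symbol.nonterminal B] ++ mu Y)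

/-- the pumping decomposition -/
def PumpOut (g : ContextFreeGrammar.{0} T) (z : List T) (p : ℕ) : Prop :=
  ∃ (B : g.NT) (U V W X Y : List T),
    z = U ++ V ++ W ++ X ++ Y ∧ V ++ X ≠ [] ∧ V.length + W.length + X.length ≤ p ∧
    g.Derives [Symbol.nonterminal g.initial] (mu U ++ [Symbol.nonterminal B] ++ mu Y) ∧
    g.Derives [Symbol.nonterminal B] (mu V ++ [Symbol.nonterminal B] ++ mu X) ∧
    g.Derives [Symbol.nonterminal B] (mu W)

theorem descend (t_root : PT g g.initial)
    (hmin : ∀ t'' : PT g g.initial, yieldT t'' = yieldT t_root → sizeT t_root ≤ sizeT t'')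
    (B0 : ℕ) :
    ∀ (N : ℕ) (s : Finset g.NT) {C : g.NT} (t : PT g C),
      sizeT t ≤ N → s ⊆ NTS g →
      Kc g ^ ((NTS g).card - s.card) < (yieldT t).length →
      (yieldT t).length ≤ B0 →
      (∀ B ∈ s, AncRec t_root B0 t B) →
      ∀ (Fo : PT g C → PT g g.initial) (U Y : List T),
        Fo t = t_root →
        (∀ u, yieldT (Fo u) = U ++ yieldT u ++ Y) →
        (∀ u, sizeT (Fo u) + sizeT t = sizeT t_root + sizeT u) →
        g.Derives [Symbol.nonterminal g.initial]
          (mu U ++ [Symbol.nonterminal C] ++ mu Y) →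
        PumpOut g (yieldT t_root) B0 := by
  classical
  intro N
  induction N with
  | zero =>
    intro s C t hsize _ _ _ _ _ _ _ _ _ _ _
    exact absurd (sizeT_pos t) (by omega)
  | succ N ih =>
    intro s C t hsize hsub hbig hB0 hseen Fo U Y hFo hFy hFs hFd
    by_cases hC : C ∈ s
    · -- found a repeated nonterminal
      obtain ⟨t_a, V, X, U', Y', Fi, Fo', e1, e2, e3, e4, e5, e6, e7, e8, e9, e10⟩ := hseen C hC
      have hVX : V ++ X ≠ [] := by
        intro hnil
        obtain ⟨hV, hX⟩ := List.append_eq_nil_iff.mp hnil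
        have hya : yieldT t_a = yieldT t := by rw [← e1, e2 t, hV, hX]; simp
        have hy1 : yieldT (Fo' t) = yieldT t_root := by rw [e7 t, ← hya, ← e7 t_a, e6]
        have h2 := hmin _ hy1
        have h3 := e8 t
        omega
      refine ⟨C, U', V, yieldT t, X, Y', ?_, hVX, ?_, e10, e9, soundT t⟩
      · rw [← e6, e7 t_a, ← e1, e2 t]; simp [List.append_assoc]
      · have hh := e2 t; rw [e1] at hh
        have hl := congrArg List.length hh
        simp at hl; omega
    · -- continue descending
      have hCN : C ∈ NTS g := root_mem_NTS t
      have hcard : s.card < (NTS g).card :=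
        Finset.card_lt_card ⟨hsub, fun h => hC (h hCN)⟩
      set e := (NTS g).card - s.card with he
      have hpos : 1 ≤ e := by omega
      have hK := one_le_Kc (g := g) (T := T)
      have hM : 1 ≤ Kc g ^ (e - 1) := Nat.one_le_pow _ _ (by omega)
      have hKM : Kc g * Kc g ^ (e - 1) = Kc g ^ e := by
        conv_rhs => rw [show e = (e - 1) + 1 by omega]
        rw [pow_succ]; ring
      rcases tree_step (Kc g ^ (e - 1)) hM t with h | ⟨B₁, t₁, v, x, F, h1, h2, h3, h4, h5, h6⟩
      · rw [hKM] at h; omega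
      · have hyt : yieldT t = v ++ yieldT t₁ ++ x := by rw [← h5, h2 t₁]
        have hylen : (yieldT t₁).length ≤ (yieldT t).length := by
          rw [hyt]; simp [List.length_append]; omega
        have hcard' : (insert C s).card = s.card + 1 := Finset.card_insert_of_notMem hC
        refine ih (insert C s) t₁ (by omega) (Finset.insert_subset hCN hsub) ?_ (by omega)
          ?_ (fun u => Fo (F u)) (U ++ v) (x ++ Y) ?_ ?_ ?_ ?_
        · rw [hcard']
          have : (NTS g).card - (s.card + 1) = e - 1 := by omega
          rw [this]; exact h1
        · intro B hB
          rcases Finset.mem_insert.mp hB with rfl | hBs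
          · exact ⟨t, v, x, U, Y, F, Fo, h5, h2, h3, h4, by omega, hFo, hFy, hFs, h6, hFd⟩
          · obtain ⟨t_a, V, X, U', Y', Fi, Fo', e1, e2, e3, e4, e5, e6, e7, e8, e9, e10⟩ :=
              hseen B hBs
            refine ⟨t_a, V ++ v, x ++ X, U', Y', fun u => Fi (F u), Fo', ?_, ?_, ?_,
              by omega, e5, e6, e7, e8, ?_, e10⟩
            · show Fi (F t₁) = t_a; rw [h5, e1]
            · intro u; rw [e2 (F u), h2 u]; simp
            · intro u; beta_reduce; have := e3 (F u); have := h3 u; omega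
            · have hc := (h6.append_left (mu V)).append_right (mu X)
              have := e9.trans hc
              simpa [mu, List.append_assoc] using this
        · show Fo (F t₁) = t_root; rw [h5, hFo]
        · intro u; rw [hFy (F u), h2 u]; simp
        · intro u; beta_reduce; have := hFs (F u); have := h3 u; omega
        · have hc := (h6.append_left (mu U)).append_right (mu Y)
          have := hFd.trans hc
          simpa [mu, List.append_assoc] using this
def PF.append : {s₁ s₂ : List (Symbol T g.NT)} → PF g s₁ → PF g s₂ → PF g (s₁ ++ s₂)
  | _, _, .nil, c₂ => c₂
  | _, _, .consT a f, c₂ => .consT a (f.append c₂)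
  | _, _, .consN t f, c₂ => .consN t (f.append c₂)

theorem yieldF_append : ∀ {s₁ s₂ : List (Symbol T g.NT)} (c₁ : PF g s₁) (c₂ : PF g s₂),
    yieldF (c₁.append c₂) = yieldF c₁ ++ yieldF c₂
  | _, _, .nil, c₂ => rfl
  | _, _, .consT a f, c₂ => by simp [PF.append, yieldF, yieldF_append f c₂]
  | _, _, .consN t f, c₂ => by simp [PF.append, yieldF, yieldF_append f c₂]

theorem PF.split : ∀ (s₁ : List (Symbol T g.NT)) {s₂ : List (Symbol T g.NT)}
    (c : PF g (s₁ ++ s₂)), ∃ (c₁ : PF g s₁) (c₂ : PF g s₂), yieldF c = yieldF c₁ ++ yieldF c₂ := by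
  intro s₁
  induction s₁ with
  | nil => exact fun c => ⟨.nil, c, rfl⟩
  | cons x s₁ ih =>
    intro s₂ c
    cases c with
    | consT a f =>
      obtain ⟨c₁, c₂, h⟩ := ih f
      exact ⟨.consT a c₁, c₂, by simp [yieldF, h]⟩
    | consN t f =>
      obtain ⟨c₁, c₂, h⟩ := ih f
      exact ⟨.consN t c₁, c₂, by simp [yieldF, h]⟩

theorem PF.ofTerminals (w : List T) : ∃ c : PF g (mu w), yieldF c = w := by
  induction w with
  | nil => exact ⟨.nil, rfl⟩
  | cons a w ih => obtain ⟨c, h⟩ := ih; exact ⟨.consT a c, by simp [yieldF, h]⟩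

theorem yieldF_cast {s s' : List (Symbol T g.NT)} (h : s = s') (c : PF g s) :
    yieldF (h ▸ c) = yieldF c := by subst h; rfl

theorem complete_forest {w : List T} : ∀ {s : List (Symbol T g.NT)}, g.Derives s (mu w) →
    ∃ c : PF g s, yieldF c = w := by
  intro s h
  induction h using Relation.ReflTransGen.head_induction_on with
  | refl => exact PF.ofTerminals w
  | head hprod _ ih =>
    obtain ⟨r, hr, hrw⟩ := hprod
    obtain ⟨p, q, ha, hb⟩ := hrw.exists_parts
    subst ha hb
    obtain ⟨c, hc⟩ := ih
    obtain ⟨cp, c', h1⟩ := PF.split p ((List.append_assoc p r.output q) ▸ c)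
    obtain ⟨co, cq, h2⟩ := PF.split r.output c'
    have hcast : p ++ (Symbol.nonterminal r.input :: q) = p ++ [Symbol.nonterminal r.input] ++ q :=
      by simp
    refine ⟨hcast ▸ cp.append (PF.consN (PT.node r hr co) cq), ?_⟩
    rw [yieldF_cast, yieldF_append]
    rw [yieldF_cast] at h1
    simp only [yieldF, yieldT, hc] at *
    rw [h1, h2]


theorem exists_tree {z : List T} (hz : z ∈ g.language) :
    ∃ t : PT g g.initial, yieldT t = z := by
  obtain ⟨c, hc⟩ := complete_forest (s := [Symbol.nonterminal g.initial]) hz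
  match c, hc with
  | .consN t .nil, hc => exact ⟨t, by simpa [yieldF] using hc⟩

/-- i-fold repetition of a list -/
def pow (l : List T) : ℕ → List T
  | 0 => []
  | i + 1 => l ++ pow l i

theorem pow_snoc (l : List T) : ∀ i, pow l (i + 1) = pow l i ++ l
  | 0 => by simp [pow]
  | i + 1 => by
    show l ++ pow l (i + 1) = (l ++ pow l i) ++ l
    rw [pow_snoc l i]; simp

theorem pump_iter {B : g.NT} {V X : List T}
    (h : g.Derives [Symbol.nonterminal B] (mu V ++ [Symbol.nonterminal B] ++ mu X)) :
    ∀ i, g.Derives [Symbol.nonterminal B]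
      (mu (pow V i) ++ [Symbol.nonterminal B] ++ mu (pow X i))
  | 0 => by simpa [pow] using Derives.refl ([Symbol.nonterminal B] : List (Symbol T g.NT))
  | i + 1 => by
    have ih := pump_iter h i
    have hc := (ih.append_left (mu V)).append_right (mu X)
    have hthis := h.trans hc
    have e1 : pow V (i + 1) = V ++ pow V i := rfl
    have e2 : pow X (i + 1) = pow X i ++ X := pow_snoc X i
    rw [e1, e2]
    simp only [mu, List.map_append, List.append_assoc] at hthis ⊢
    exact hthis

theorem cfg_pumping (g : ContextFreeGrammar.{0} T) :
    ∃ p : ℕ, 1 ≤ p ∧ ∀ z ∈ g.language, p ≤ z.length →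
      ∃ u v w x y : List T, z = u ++ v ++ w ++ x ++ y ∧ v ++ x ≠ [] ∧
        v.length + w.length + x.length ≤ p ∧
        ∀ i : ℕ, (u ++ pow v i ++ w ++ pow x i ++ y) ∈ g.language := by
  classical
  have hK := one_le_Kc (g := g) (T := T)
  set n := (NTS g).card with hn
  refine ⟨Kc g ^ (n + 1) + 1, by omega, ?_⟩
  intro z hz hlen
  obtain ⟨t0, ht0⟩ := exists_tree hz
  have hex : ∃ m, ∃ t : PT g g.initial, yieldT t = z ∧ sizeT t = m := ⟨_, t0, ht0, rfl⟩
  obtain ⟨t_root, hty, hts⟩ := Nat.find_spec hex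
  have hmin : ∀ t'' : PT g g.initial, yieldT t'' = yieldT t_root → sizeT t_root ≤ sizeT t'' := by
    intro t'' h
    by_contra hlt
    push_neg at hlt
    exact Nat.find_min hex (by omega) ⟨t'', h.trans hty, rfl⟩
  have hKn : 1 ≤ Kc g ^ n := Nat.one_le_pow _ _ (by omega)
  have hpow : Kc g ^ n ≤ Kc g ^ (n + 1) := Nat.pow_le_pow_right (by omega) (by omega)
  have hzlen : Kc g ^ n < (yieldT t_root).length := by
    rw [hty]; omega
  obtain ⟨Bs, ts, U0, Y0, F0, l1, l2, l3, l4, l5, l6⟩ :=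
    localize (Kc g ^ n) hKn (sizeT t_root) t_root le_rfl hzlen
  have hB0 : (yieldT ts).length ≤ Kc g ^ (n + 1) := by
    calc (yieldT ts).length ≤ Kc g * Kc g ^ n := l2
      _ = Kc g ^ (n + 1) := by rw [pow_succ]; ring
  have hout : PumpOut g (yieldT t_root) (Kc g ^ (n + 1)) := by
    refine descend t_root hmin (Kc g ^ (n + 1)) (sizeT ts) ∅ ts le_rfl (Finset.empty_subset _)
      ?_ hB0 (by simp) F0 U0 Y0 l5 l3 l4 l6
    simpa using l1
  obtain ⟨B, U, V, W, X, Y, hdec, hVX, hlen3, D1, D2, D3⟩ := hout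
  refine ⟨U, V, W, X, Y, by rw [← hty]; exact hdec, hVX, by omega, ?_⟩
  intro i
  have hiter := pump_iter D2 i
  have base := (hiter.append_left (mu U)).append_right (mu Y)
  have base2 := D1.trans base
  have step2 := (D3.append_left (mu U ++ mu (pow V i))).append_right (mu (pow X i) ++ mu Y)
  rw [ContextFreeGrammar.mem_language_iff]
  have goal2 : g.Derives [Symbol.nonterminal g.initial]
      (mu (U ++ pow V i ++ W ++ pow X i ++ Y)) := by
    simp only [mu, List.map_append, List.append_assoc] at base2 step2 ⊢
    exact base2.trans step2
  exact goal2

end Pump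

namespace PumpApp

theorem length_eq_counts (l : List PairAct) :
    l.length = l.count .tA + l.count .tB + l.count .tS + l.count .ta + l.count .tb := by
  induction l with
  | nil => simp
  | cons c l ih => cases c <;> simp [List.count_cons, ih] <;> omega

theorem wal_counts {m : List PairAct} (hm : m ∈ WeakAgreeLang) :
    m.count .ta ≤ m.count .tA ∧ m.count .tb ≤ m.count .tB ∧ m.count .tS = 1 := by
  obtain ⟨u, v, h1, h2, h3, h4, h5⟩ := hm
  have hu_ta : u.count .ta = 0 :=
    List.count_eq_zero.mpr (fun hc => by rcases h1 _ hc with h | h <;> simp_all)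
  have hu_tb : u.count .tb = 0 :=
    List.count_eq_zero.mpr (fun hc => by rcases h1 _ hc with h | h <;> simp_all)
  have hu_tS : u.count .tS = 0 :=
    List.count_eq_zero.mpr (fun hc => by rcases h1 _ hc with h | h <;> simp_all)
  have hv_tA : v.count .tA = 0 :=
    List.count_eq_zero.mpr (fun hc => by rcases h2 _ hc with h | h <;> simp_all)
  have hv_tB : v.count .tB = 0 :=
    List.count_eq_zero.mpr (fun hc => by rcases h2 _ hc with h | h <;> simp_all)
  have hv_tS : v.count .tS = 0 :=
    List.count_eq_zero.mpr (fun hc => by rcases h2 _ hc with h | h <;> simp_all)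
  subst h3
  refine ⟨?_, ?_, ?_⟩ <;> simp [List.count_append, List.count_cons] <;> omega

theorem helper1 {α : Type} [DecidableEq α] {u m y pre suf : List α} {c : α}
    (hz : u ++ (m ++ y) = pre ++ suf) (hsuf : suf.count c = 0) (hm : 1 ≤ m.count c) :
    u.length < pre.length := by
  by_contra hle
  push_neg at hle
  rcases List.append_eq_append_iff.mp hz with ⟨a', ha1, ha2⟩ | ⟨c', hc1, hc2⟩
  · have : a' = [] := by
      have := congrArg List.length ha1
      simp at this
      exact List.eq_nil_of_length_eq_zero (by omega)
    subst this
    simp at ha2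
    rw [← ha2] at hsuf
    simp [List.count_append] at hsuf
    omega
  · rw [hc2] at hsuf
    simp [List.count_append] at hsuf
    omega

theorem helper2 {α : Type} [DecidableEq α] {w1 w2 pre suf : List α} {c : α}
    (hz : w1 ++ w2 = pre ++ suf) (hpre : pre.count c = 0) (hm : 1 ≤ w1.count c) :
    pre.length < w1.length := by
  by_contra hle
  push_neg at hle
  rcases List.append_eq_append_iff.mp hz with ⟨a', ha1, ha2⟩ | ⟨c', hc1, hc2⟩
  · rw [ha1] at hpre
    simp [List.count_append] at hpre
    omega
  · have : c' = [] := by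
      have := congrArg List.length hc1
      simp at this
      exact List.eq_nil_of_length_eq_zero (by omega)
    subst this
    simp at hc1
    rw [hc1] at hm
    omega

end PumpApp

theorem count_pow {α : Type} [DecidableEq α] (c : α) (l : List α) :
    ∀ i, (Pump.pow l i).count c = i * l.count c
  | 0 => by simp [Pump.pow]
  | i + 1 => by
    show (l ++ Pump.pow l i).count c = _
    rw [List.count_append, count_pow c l i]; ring

open PairAct

/-- 𝔚 ∩ ℒ(𝒜) is not a context-free language. -/
theorem weakAgreement_not_contextFree : ¬ WeakAgreeLang.IsContextFree := by
  rintro ⟨g, hg⟩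
  obtain ⟨p, hp1, hpump⟩ := Pump.cfg_pumping g
  set z := List.replicate p tA ++ List.replicate p tB ++ [tS] ++
    List.replicate p ta ++ List.replicate p tb with hzdef
  have hzW : z ∈ WeakAgreeLang := by
    refine ⟨List.replicate p tA ++ List.replicate p tB,
      List.replicate p ta ++ List.replicate p tb, ?_, ?_, ?_, ?_, ?_⟩
    · intro c hc
      rcases List.mem_append.mp hc with h | h
      · exact Or.inl (List.eq_of_mem_replicate h)
      · exact Or.inr (List.eq_of_mem_replicate h)
    · intro c hc
      rcases List.mem_append.mp hc with h | h
      · exact Or.inl (List.eq_of_mem_replicate h)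
      · exact Or.inr (List.eq_of_mem_replicate h)
    · simp [hzdef, List.append_assoc]
    · simp [List.count_append, List.count_replicate]
    · simp [List.count_append, List.count_replicate]
  have hzg : z ∈ g.language := by rw [hg]; exact hzW
  have hzlen : p ≤ z.length := by
    simp only [hzdef, List.length_append, List.length_replicate, List.length_cons,
      List.length_nil]
    omega
  obtain ⟨u, v, w, x, y, hdec, hVX, hlen3, hmem⟩ := hpump z hzg hzlen
  have hmemW : ∀ i, (u ++ Pump.pow v i ++ w ++ Pump.pow x i ++ y) ∈ WeakAgreeLang := by
    intro i; have := hmem i; rwa [hg] at this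
  have h0 := PumpApp.wal_counts (hmemW 0)
  have h2 := PumpApp.wal_counts (hmemW 2)
  have h1 := PumpApp.wal_counts (hmemW 1)
  simp only [List.count_append, count_pow, Nat.zero_mul, Nat.add_zero, Nat.zero_add] at h0 h2 h1
  -- counts of z
  have hzc : ∀ c : PairAct, z.count c =
      u.count c + v.count c + w.count c + x.count c + y.count c := by
    intro c; rw [hdec]; simp [List.count_append]; omega
  have hzA : z.count tA = p := by simp [hzdef, List.count_append, List.count_replicate]
  have hzB : z.count tB = p := by simp [hzdef, List.count_append, List.count_replicate]
  have hza : z.count ta = p := by simp [hzdef, List.count_append, List.count_replicate]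
  have hzb : z.count tb = p := by simp [hzdef, List.count_append, List.count_replicate]
  have hzS : z.count tS = 1 := by simp [hzdef, List.count_append, List.count_replicate]
  have eA := hzc tA; have eB := hzc tB; have ea := hzc ta; have eb := hzc tb
  have eS := hzc tS
  have hVXlen : 1 ≤ v.length + x.length := by
    have := List.length_pos_iff.mpr hVX
    simp [List.length_append] at this; omega
  have lv := PumpApp.length_eq_counts v
  have lx := PumpApp.length_eq_counts x
  have hkey : (1 ≤ v.count tA + x.count tA ∧ 1 ≤ v.count ta + x.count ta) ∨
      (1 ≤ v.count tB + x.count tB ∧ 1 ≤ v.count tb + x.count tb) := by omega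
  -- positional contradiction
  have hE : u ++ v ++ w ++ x ++ y = List.replicate p tA ++ List.replicate p tB ++ [tS] ++
      List.replicate p ta ++ List.replicate p tb := hdec.symm.trans hzdef
  have hmlen : (v ++ w ++ x).length ≤ p := by simp [List.length_append]; omega
  rcases hkey with ⟨hk1, hk2⟩ | ⟨hk1, hk2⟩
  · have hu1 : u.length < p := by
      have := PumpApp.helper1 (c := tA) (u := u) (m := v ++ w ++ x) (y := y)
        (pre := List.replicate p tA)
        (suf := List.replicate p tB ++ [tS] ++ List.replicate p ta ++ List.replicate p tb)
        (by simp only [List.append_assoc] at hE ⊢; exact hE)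
        (by simp [List.count_append, List.count_replicate])
        (by simp [List.count_append]; omega)
      simpa using this
    have hu2 : 2 * p + 1 < (u ++ (v ++ w ++ x)).length := by
      have := PumpApp.helper2 (c := ta) (w1 := u ++ (v ++ w ++ x))
        (pre := List.replicate p tA ++ List.replicate p tB ++ [tS])
        (suf := List.replicate p ta ++ List.replicate p tb)
        (w2 := y)
        (by simp only [List.append_assoc] at hE ⊢; exact hE)
        (by simp [List.count_append, List.count_replicate])
        (by simp [List.count_append]; omega)
      simp only [List.length_append, List.length_replicate, List.length_cons,
        List.length_nil] at this
      omega
    simp only [List.length_append] at hu2 hmlen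
    omega
  · have hu1 : u.length < 2 * p := by
      have := PumpApp.helper1 (c := tB) (u := u) (m := v ++ w ++ x) (y := y)
        (pre := List.replicate p tA ++ List.replicate p tB)
        (suf := [tS] ++ List.replicate p ta ++ List.replicate p tb)
        (by simp only [List.append_assoc] at hE ⊢; exact hE)
        (by simp [List.count_append, List.count_replicate])
        (by simp [List.count_append]; omega)
      simp only [List.length_append, List.length_replicate] at this
      omega
    have hu2 : 3 * p + 1 < (u ++ (v ++ w ++ x)).length := by
      have := PumpApp.helper2 (c := tb) (w1 := u ++ (v ++ w ++ x))
        (pre := List.replicate p tA ++ List.replicate p tB ++ [tS] ++ List.replicate p ta)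
        (suf := List.replicate p tb)
        (w2 := y)
        (by simp only [List.append_assoc] at hE ⊢; exact hE)
        (by simp [List.count_append, List.count_replicate])
        (by simp [List.count_append]; omega)
      simp only [List.length_append, List.length_replicate, List.length_cons,
        List.length_nil] at this
      omega
    simp only [List.length_append] at hu2 hmlen
    omega
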